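/- arXiv:1605.00558 — 6 statements merged into one kernel-verified Lean document; each statement's English description precedes it below -/
import Mathlib

section
/- Minimizing the number of pages and minimizing the number of symbol replications are not equivalent objectives for Pagination. Concretely, take capacity C = 5 and the tile set T = { {a,1}, {3,5,7}, {a,2}, {4,6,8} } over the nine distinct symbols a,1,2,3,4,5,6,7,8. Then: (i) the pagination P1 = ( {{a,1},{3,5,7}}, {{a,2},{4,6,8}} ) is a valid pagination of T with 2 pages; (ii) no valid pagination of T has fewer than 2 pages, so P1 is optimal; (iii) P1 has exactly 1 replication (the symbol a occurs on both pages); (iv) the pagination P2 = ( {{a,1},{a,2}}, {{3,5,7}}, {{4,6,8}} ) is a valid pagination of T with 3 pages and 0 replications; (v) every valid pagination of T with exactly 2 pages has at least 1 replication. -/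
open Finset

/-- The volume of a page (a finite set of tiles): the number of distinct symbols. -/
def volume {α : Type*} [DecidableEq α] (p : Finset (Finset α)) : ℕ := (p.sup id).card

/-- A pagination of `T`: a partition of `T` into nonempty pages. -/
def IsPagination {α : Type*} (T : Finset (Finset α)) (P : Finset (Finset (Finset α))) : Prop :=
  (∀ p ∈ P, p.Nonempty) ∧
  (∀ p ∈ P, ∀ q ∈ P, p ≠ q → Disjoint p q) ∧
  (∀ t : Finset α, t ∈ T ↔ ∃ p ∈ P, t ∈ p)

/-- A pagination is valid for capacity `C` if every page has volume at most `C`. -/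
def IsValidPagination {α : Type*} [DecidableEq α] (C : ℕ) (T : Finset (Finset α))
    (P : Finset (Finset (Finset α))) : Prop :=
  IsPagination T P ∧ ∀ p ∈ P, volume p ≤ C

/-- The number of replications of a pagination: `Σ_α (r_α - 1)` over symbols `α`
occurring in the pagination, where `r_α` is the number of pages containing `α`. -/
def replications {α : Type*} [DecidableEq α] (P : Finset (Finset (Finset α))) : ℕ :=
  ∑ a ∈ P.sup (fun p => p.sup id), ((P.filter (fun p => a ∈ p.sup id)).card - 1)

/-- Symbols: a := 0, and the digits 1,…,8. -/
def T0 : Finset (Finset ℕ) := {{0, 1}, {3, 5, 7}, {0, 2}, {4, 6, 8}}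

def P1 : Finset (Finset (Finset ℕ)) := {{{0, 1}, {3, 5, 7}}, {{0, 2}, {4, 6, 8}}}

def P2 : Finset (Finset (Finset ℕ)) := {{{0, 1}, {0, 2}}, {{3, 5, 7}}, {{4, 6, 8}}}


lemma tile_sub {p : Finset (Finset ℕ)} {t : Finset ℕ} (ht : t ∈ p) : t ⊆ p.sup id :=
  Finset.le_sup (f := id) ht

lemma stmt0_ii (Q : Finset (Finset (Finset ℕ))) (h : IsValidPagination 5 T0 Q) :
    2 ≤ Q.card := by
  obtain ⟨⟨hne, hdisj, hmem⟩, hvol⟩ := h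
  obtain ⟨p0, hp0, hp01⟩ := (hmem {0,1}).1 (by decide)
  by_contra hlt
  push_neg at hlt
  have hcard : Q.card = 1 := le_antisymm (by omega) (Finset.card_pos.2 ⟨p0, hp0⟩)
  obtain ⟨x, hx⟩ := Finset.card_eq_one.1 hcard
  subst hx
  obtain ⟨q2, hq2, ht2⟩ := (hmem {3,5,7}).1 (by decide)
  obtain ⟨q3, hq3, ht3⟩ := (hmem {0,2}).1 (by decide)
  obtain ⟨q4, hq4, ht4⟩ := (hmem {4,6,8}).1 (by decide)
  rw [Finset.mem_singleton] at hp0 hq2 hq3 hq4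
  have h1 : ({0,1} : Finset ℕ) ∈ x := hp0 ▸ hp01
  have h2 : ({3,5,7} : Finset ℕ) ∈ x := hq2 ▸ ht2
  have h3 : ({0,2} : Finset ℕ) ∈ x := hq3 ▸ ht3
  have h4 : ({4,6,8} : Finset ℕ) ∈ x := hq4 ▸ ht4
  have hv := hvol x (by simp)
  have hsub : ({0,1,2,3,4,5,6,7,8} : Finset ℕ) ⊆ x.sup id := by
    intro a ha
    fin_cases ha <;> first
      | exact tile_sub h1 (by decide) | exact tile_sub h2 (by decide)
      | exact tile_sub h3 (by decide) | exact tile_sub h4 (by decide)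
  have hc := Finset.card_le_card hsub
  have h9 : (#({0,1,2,3,4,5,6,7,8} : Finset ℕ)) = 9 := by decide
  simp only [volume] at hv
  omega

lemma stmt0_v (Q : Finset (Finset (Finset ℕ))) (h : IsValidPagination 5 T0 Q)
    (h2 : Q.card = 2) : 1 ≤ replications Q := by
  obtain ⟨⟨hne, hdisj, hmem⟩, hvol⟩ := h
  obtain ⟨p, hp, hp1⟩ := (hmem {0,1}).1 (by decide)
  obtain ⟨q, hq, hq1⟩ := (hmem {0,2}).1 (by decide)
  by_cases hpq : p = q
  · subst hpq
    obtain ⟨r, hr, hr1⟩ := (hmem {3,5,7}).1 (by decide)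
    obtain ⟨s, hs, hs1⟩ := (hmem {4,6,8}).1 (by decide)
    have hvp := hvol p hp
    have hrp : r ≠ p := by
      rintro rfl
      have hsub : ({0,1,2,3,5,7} : Finset ℕ) ⊆ r.sup id := by
        intro a ha
        fin_cases ha <;> first
          | exact tile_sub hp1 (by decide) | exact tile_sub hq1 (by decide)
          | exact tile_sub hr1 (by decide)
      have hc := Finset.card_le_card hsub
      have h6 : (#({0,1,2,3,5,7} : Finset ℕ)) = 6 := by decide
      simp only [volume] at hvp; omega
    have hsp : s ≠ p := by
      rintro rfl
      have hsub : ({0,1,2,4,6,8} : Finset ℕ) ⊆ s.sup id := by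
        intro a ha
        fin_cases ha <;> first
          | exact tile_sub hp1 (by decide) | exact tile_sub hq1 (by decide)
          | exact tile_sub hs1 (by decide)
      have hc := Finset.card_le_card hsub
      have h6 : (#({0,1,2,4,6,8} : Finset ℕ)) = 6 := by decide
      simp only [volume] at hvp; omega
    have hrs : r = s := by
      by_contra hne'
      have hsubQ : ({p, r, s} : Finset _) ⊆ Q := by
        intro x hx; simp at hx; rcases hx with rfl|rfl|rfl <;> assumption
      have h3 := Finset.card_le_card hsubQ
      rw [Finset.card_insert_of_notMem (by simp [hrp.symm, hsp.symm]),
        Finset.card_insert_of_notMem (by simpa using hne'), Finset.card_singleton] at h3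
      omega
    subst hrs
    have hvr := hvol r hr
    have hsub : ({3,4,5,6,7,8} : Finset ℕ) ⊆ r.sup id := by
      intro a ha
      fin_cases ha <;> first
        | exact tile_sub hr1 (by decide) | exact tile_sub hs1 (by decide)
    have hc := Finset.card_le_card hsub
    have h6 : (#({3,4,5,6,7,8} : Finset ℕ)) = 6 := by decide
    simp only [volume] at hvr; omega
  · have h0p : (0:ℕ) ∈ p.sup id := tile_sub hp1 (by decide)
    have h0q : (0:ℕ) ∈ q.sup id := tile_sub hq1 (by decide)
    have hmem0 : (0:ℕ) ∈ Q.sup (fun p => p.sup id) :=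
      (Finset.le_sup (f := fun p => p.sup id) hp) h0p
    have hfilt : 2 ≤ (Q.filter (fun p => (0:ℕ) ∈ p.sup id)).card := by
      have hsubf : ({p, q} : Finset _) ⊆ Q.filter (fun p => (0:ℕ) ∈ p.sup id) := by
        intro x hx; simp only [Finset.mem_insert, Finset.mem_singleton] at hx
        rcases hx with rfl|rfl
        · exact Finset.mem_filter.2 ⟨hp, h0p⟩
        · exact Finset.mem_filter.2 ⟨hq, h0q⟩
      have := Finset.card_le_card hsubf
      rwa [Finset.card_insert_of_notMem (by simpa using hpq), Finset.card_singleton] at this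
    calc 1 ≤ (Q.filter (fun p => (0:ℕ) ∈ p.sup id)).card - 1 := by omega
      _ ≤ replications Q :=
        Finset.single_le_sum (f := fun a => ((Q.filter (fun p => a ∈ p.sup id)).card - 1))
          (fun i _ => Nat.zero_le _) hmem0

/-- Minimizing the number of pages and minimizing the number of symbol replications
are not equivalent objectives. -/
theorem stmt0 :
    (IsValidPagination 5 T0 P1 ∧ P1.card = 2) ∧
    (∀ Q, IsValidPagination 5 T0 Q → 2 ≤ Q.card) ∧
    replications P1 = 1 ∧
    (IsValidPagination 5 T0 P2 ∧ P2.card = 3 ∧ replications P2 = 0) ∧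
    (∀ Q, IsValidPagination 5 T0 Q → Q.card = 2 → 1 ≤ replications Q) := by
  refine ⟨⟨⟨⟨?_, ?_, ?_⟩, ?_⟩, by decide⟩, stmt0_ii, by decide,
    ⟨⟨⟨?_, ?_, ?_⟩, ?_⟩, by decide, by decide⟩, stmt0_v⟩
  · decide
  · decide
  · intro t; simp [T0, P1]; tauto
  · decide
  · decide
  · decide
  · intro t; simp [T0, P2]; tauto
  · decide
end

section
/- A valid pagination whose total loss is minimal is not necessarily optimal. Concretely, take capacity C = 4 and the tile set T = { {1,2}, {1,3}, {2,3}, {a,b}, {a,c}, {b,c} } over the six distinct symbols 1,2,3,a,b,c. Then: (i) the pagination P2 = ( {{1,2},{1,3},{2,3}}, {{a,b},{a,c},{b,c}} ) is valid with 2 pages and total loss 2; (ii) no valid pagination of T has fewer than 2 pages, so P2 is optimal; (iii) the pagination P1 = ( {{1,2},{a,b}}, {{1,3},{a,c}}, {{2,3},{b,c}} ) is valid with 3 pages and total loss 0, which is minimal among all valid paginations of T; hence P1 has minimal loss but is not optimal, and the optimal pagination P2 does not have minimal loss. -/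
open Finset

/-- The total loss of a pagination: the sum over its pages of `C - volume`. -/
def totalLoss {α : Type*} [DecidableEq α] (C : ℕ) (P : Finset (Finset (Finset α))) : ℕ :=
  ∑ p ∈ P, (C - volume p)

/-- Symbols: 1, 2, 3 and a := 11, b := 12, c := 13 (six distinct symbols). -/
def T1 : Finset (Finset ℕ) := {{1, 2}, {1, 3}, {2, 3}, {11, 12}, {11, 13}, {12, 13}}

/-- The optimal 2-page pagination, with loss 1 + 1 = 2. -/
def Q2 : Finset (Finset (Finset ℕ)) := {{{1, 2}, {1, 3}, {2, 3}}, {{11, 12}, {11, 13}, {12, 13}}}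

/-- The non-optimal 3-page pagination, with loss 0. -/
def Q1 : Finset (Finset (Finset ℕ)) :=
  {{{1, 2}, {11, 12}}, {{1, 3}, {11, 13}}, {{2, 3}, {12, 13}}}


lemma validQ2 : IsValidPagination 4 T1 Q2 := by
  refine ⟨⟨?_, ?_, ?_⟩, ?_⟩
  · decide
  · decide
  · intro t; simp [T1, Q2]; tauto
  · decide

lemma validQ1 : IsValidPagination 4 T1 Q1 := by
  refine ⟨⟨?_, ?_, ?_⟩, ?_⟩
  · decide
  · decide
  · intro t; simp [T1, Q1]; tauto
  · decide

lemma two_le (Q : Finset (Finset (Finset ℕ))) (hQ : IsValidPagination 4 T1 Q) :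
    2 ≤ Q.card := by
  by_contra h
  push_neg at h
  have hle : Q.card ≤ 1 := by omega
  rw [Finset.card_le_one] at hle
  obtain ⟨p1, hp1, ht1⟩ := (hQ.1.2.2 {1,2}).1 (by decide)
  obtain ⟨p2, hp2, ht2⟩ := (hQ.1.2.2 {2,3}).1 (by decide)
  obtain ⟨p3, hp3, ht3⟩ := (hQ.1.2.2 {11,12}).1 (by decide)
  have e2 : p2 = p1 := hle _ hp2 _ hp1
  have e3 : p3 = p1 := hle _ hp3 _ hp1
  subst e2 e3
  have hs : ({1,2,3,11,12} : Finset ℕ) ⊆ p3.sup id := by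
    intro x hx
    have h1 : ({1,2} : Finset ℕ) ⊆ p3.sup id := Finset.le_sup (f := id) ht1
    have h2 : ({2,3} : Finset ℕ) ⊆ p3.sup id := Finset.le_sup (f := id) ht2
    have h3 : ({11,12} : Finset ℕ) ⊆ p3.sup id := Finset.le_sup (f := id) ht3
    fin_cases hx
    · exact h1 (by decide)
    · exact h1 (by decide)
    · exact h2 (by decide)
    · exact h3 (by decide)
    · exact h3 (by decide)
  have : 5 ≤ volume p3 := by
    have := Finset.card_le_card hs
    simpa [volume] using this
  have := hQ.2 p3 hp1
  omega

/-- A valid pagination of minimal loss is not necessarily optimal. -/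
theorem stmt1 :
    (IsValidPagination 4 T1 Q2 ∧ Q2.card = 2 ∧ totalLoss 4 Q2 = 2) ∧
    (∀ Q, IsValidPagination 4 T1 Q → 2 ≤ Q.card) ∧
    (IsValidPagination 4 T1 Q1 ∧ Q1.card = 3 ∧ totalLoss 4 Q1 = 0 ∧
      (∀ Q, IsValidPagination 4 T1 Q → totalLoss 4 Q1 ≤ totalLoss 4 Q)) := by
  refine ⟨⟨validQ2, by decide, by decide⟩, two_le,
    validQ1, by decide, by decide, fun Q _ => ?_⟩
  have : totalLoss 4 Q1 = 0 := by decide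
  omega
end

section
/- A tile included in another tile can be removed without changing the optimal number of pages. Precisely: let T be a finite collection of nonempty finite tiles, C > 0 a capacity, and t, t' ∈ T distinct tiles with t ⊆ t'. Then: (i) for every valid pagination P' of T \ {t}, adding t to the page of P' containing t' yields a valid pagination of T with the same number of pages; (ii) for every valid pagination P of T, removing t from its page (and deleting that page if it becomes empty) yields a valid pagination of T \ {t} with at most as many pages; consequently the minimum number of pages over valid paginations of T equals the minimum number of pages over valid paginations of T \ {t}. -/
open Finset

/-- The minimum number of pages over valid paginations of `T` for capacity `C`. -/
noncomputable def minPages {α : Type*} [DecidableEq α] (C : ℕ) (T : Finset (Finset α)) : ℕ :=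
  sInf {n | ∃ P : Finset (Finset (Finset α)), IsValidPagination C T P ∧ P.card = n}

/-- A tile included in another tile can be removed without changing the optimal
number of pages. -/
theorem stmt4 {α : Type*} [DecidableEq α] (C : ℕ) (hC : 0 < C)
    (T : Finset (Finset α)) (hne : ∀ s ∈ T, s.Nonempty)
    (t t' : Finset α) (ht : t ∈ T) (ht' : t' ∈ T) (hdist : t ≠ t') (hsub : t ⊆ t') :
    (∀ P', IsValidPagination C (T.erase t) P' → ∀ p ∈ P', t' ∈ p →
      IsValidPagination C T (insert (insert t p) (P'.erase p)) ∧
      (insert (insert t p) (P'.erase p)).card = P'.card) ∧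
    (∀ P, IsValidPagination C T P → ∀ p ∈ P, t ∈ p →
      IsValidPagination C (T.erase t)
        (if p.erase t = ∅ then P.erase p else insert (p.erase t) (P.erase p)) ∧
      (if p.erase t = ∅ then P.erase p else insert (p.erase t) (P.erase p)).card ≤ P.card) ∧
    minPages C T = minPages C (T.erase t) := by
  have ht'ne : t' ≠ t := Ne.symm hdist
  have partA : ∀ P', IsValidPagination C (T.erase t) P' → ∀ p ∈ P', t' ∈ p →
      IsValidPagination C T (insert (insert t p) (P'.erase p)) ∧
      (insert (insert t p) (P'.erase p)).card = P'.card := by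
    rintro P' ⟨⟨hne', hdisj', hmem'⟩, hvol'⟩ p hp ht'p
    have htnot : ∀ q ∈ P', t ∉ q := by
      intro q hq htq
      have : t ∈ T.erase t := (hmem' t).mpr ⟨q, hq, htq⟩
      simp at this
    have hins : insert t p ∉ P'.erase p := by
      intro h
      exact htnot _ (Finset.mem_of_mem_erase h) (Finset.mem_insert_self t p)
    constructor
    · refine ⟨⟨?_, ?_, ?_⟩, ?_⟩
      · intro q hq
        rcases Finset.mem_insert.mp hq with rfl | hq
        · exact ⟨t, Finset.mem_insert_self t p⟩
        · exact hne' q (Finset.mem_of_mem_erase hq)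
      · intro q hq r hr hqr
        rcases Finset.mem_insert.mp hq with rfl | hq <;>
          rcases Finset.mem_insert.mp hr with rfl | hr
        · exact absurd rfl hqr
        · have hrP : r ∈ P' := Finset.mem_of_mem_erase hr
          have hrp : r ≠ p := Finset.ne_of_mem_erase hr
          exact Finset.disjoint_insert_left.mpr
            ⟨htnot r hrP, hdisj' p hp r hrP (Ne.symm hrp)⟩
        · have hqP : q ∈ P' := Finset.mem_of_mem_erase hq
          have hqp : q ≠ p := Finset.ne_of_mem_erase hq
          exact (Finset.disjoint_insert_left.mpr
            ⟨htnot q hqP, hdisj' p hp q hqP (Ne.symm hqp)⟩).symm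
        · exact hdisj' q (Finset.mem_of_mem_erase hq) r (Finset.mem_of_mem_erase hr) hqr
      · intro s
        constructor
        · intro hs
          by_cases hst : s = t
          · exact ⟨insert t p, Finset.mem_insert_self _ _, hst ▸ Finset.mem_insert_self t p⟩
          · obtain ⟨q, hq, hsq⟩ := (hmem' s).mp (Finset.mem_erase.mpr ⟨hst, hs⟩)
            by_cases hqp : q = p
            · exact ⟨insert t p, Finset.mem_insert_self _ _,
                Finset.mem_insert_of_mem (hqp ▸ hsq)⟩
            · exact ⟨q, Finset.mem_insert_of_mem (Finset.mem_erase.mpr ⟨hqp, hq⟩), hsq⟩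
        · rintro ⟨q, hq, hsq⟩
          rcases Finset.mem_insert.mp hq with rfl | hq
          · rcases Finset.mem_insert.mp hsq with rfl | hsq
            · exact ht
            · exact Finset.mem_of_mem_erase ((hmem' s).mpr ⟨p, hp, hsq⟩)
          · exact Finset.mem_of_mem_erase
              ((hmem' s).mpr ⟨q, Finset.mem_of_mem_erase hq, hsq⟩)
      · intro q hq
        rcases Finset.mem_insert.mp hq with rfl | hq
        · have hle : id t ≤ p.sup id := le_trans hsub (Finset.le_sup (f := id) ht'p)
          have : volume (insert t p) = volume p := by
            unfold volume
            rw [Finset.sup_insert, sup_eq_right.mpr hle]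
          rw [this]
          exact hvol' p hp
        · exact hvol' q (Finset.mem_of_mem_erase hq)
    · rw [Finset.card_insert_of_notMem hins, Finset.card_erase_add_one hp]
  have partB : ∀ P, IsValidPagination C T P → ∀ p ∈ P, t ∈ p →
      IsValidPagination C (T.erase t)
        (if p.erase t = ∅ then P.erase p else insert (p.erase t) (P.erase p)) ∧
      (if p.erase t = ∅ then P.erase p else insert (p.erase t) (P.erase p)).card ≤ P.card := by
    rintro P ⟨⟨hneP, hdisjP, hmemP⟩, hvolP⟩ p hp htp
    have htonly : ∀ q ∈ P, t ∈ q → q = p := by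
      intro q hq htq
      by_contra h
      exact (Finset.disjoint_left.mp (hdisjP q hq p hp h) htq) htp
    by_cases hpe : p.erase t = ∅
    · rw [if_pos hpe]
      have hpt : p = {t} := by
        apply Finset.eq_singleton_iff_unique_mem.mpr
        refine ⟨htp, fun x hx => ?_⟩
        by_contra hxt
        exact absurd (Finset.mem_erase.mpr ⟨hxt, hx⟩) (by rw [hpe]; simp)
      constructor
      · refine ⟨⟨?_, ?_, ?_⟩, ?_⟩
        · exact fun q hq => hneP q (Finset.mem_of_mem_erase hq)
        · exact fun q hq r hr hqr => hdisjP q (Finset.mem_of_mem_erase hq)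
            r (Finset.mem_of_mem_erase hr) hqr
        · intro s
          constructor
          · intro hs
            have hst : s ≠ t := (Finset.mem_erase.mp hs).1
            obtain ⟨q, hq, hsq⟩ := (hmemP s).mp (Finset.mem_erase.mp hs).2
            have hqp : q ≠ p := by
              intro h
              rw [h, hpt] at hsq
              exact hst (Finset.mem_singleton.mp hsq)
            exact ⟨q, Finset.mem_erase.mpr ⟨hqp, hq⟩, hsq⟩
          · rintro ⟨q, hq, hsq⟩
            have hqP : q ∈ P := Finset.mem_of_mem_erase hq
            refine Finset.mem_erase.mpr ⟨?_, (hmemP s).mpr ⟨q, hqP, hsq⟩⟩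
            intro h
            exact Finset.ne_of_mem_erase hq (htonly q hqP (h ▸ hsq))
        · exact fun q hq => hvolP q (Finset.mem_of_mem_erase hq)
      · exact Finset.card_erase_le
    · rw [if_neg hpe]
      have hpne : (p.erase t).Nonempty := Finset.nonempty_iff_ne_empty.mpr hpe
      have hnotin : p.erase t ∉ P.erase p := by
        intro h
        obtain ⟨s, hs⟩ := hpne
        exact Finset.disjoint_left.mp
          (hdisjP _ (Finset.mem_of_mem_erase h) p hp (Finset.ne_of_mem_erase h))
          hs (Finset.mem_of_mem_erase hs)
      constructor
      · refine ⟨⟨?_, ?_, ?_⟩, ?_⟩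
        · intro q hq
          rcases Finset.mem_insert.mp hq with rfl | hq
          · exact hpne
          · exact hneP q (Finset.mem_of_mem_erase hq)
        · intro q hq r hr hqr
          rcases Finset.mem_insert.mp hq with rfl | hq <;>
            rcases Finset.mem_insert.mp hr with rfl | hr
          · exact absurd rfl hqr
          · exact Finset.disjoint_of_subset_left (Finset.erase_subset t p)
              (hdisjP p hp r (Finset.mem_of_mem_erase hr)
                (Ne.symm (Finset.ne_of_mem_erase hr)))
          · exact (Finset.disjoint_of_subset_left (Finset.erase_subset t p)
              (hdisjP p hp q (Finset.mem_of_mem_erase hq)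
                (Ne.symm (Finset.ne_of_mem_erase hq)))).symm
          · exact hdisjP q (Finset.mem_of_mem_erase hq) r (Finset.mem_of_mem_erase hr) hqr
        · intro s
          constructor
          · intro hs
            have hst : s ≠ t := (Finset.mem_erase.mp hs).1
            obtain ⟨q, hq, hsq⟩ := (hmemP s).mp (Finset.mem_erase.mp hs).2
            by_cases hqp : q = p
            · exact ⟨p.erase t, Finset.mem_insert_self _ _,
                Finset.mem_erase.mpr ⟨hst, hqp ▸ hsq⟩⟩
            · exact ⟨q, Finset.mem_insert_of_mem (Finset.mem_erase.mpr ⟨hqp, hq⟩), hsq⟩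
          · rintro ⟨q, hq, hsq⟩
            rcases Finset.mem_insert.mp hq with rfl | hq
            · exact Finset.mem_erase.mpr ⟨(Finset.mem_erase.mp hsq).1,
                (hmemP s).mpr ⟨p, hp, (Finset.mem_erase.mp hsq).2⟩⟩
            · have hqP : q ∈ P := Finset.mem_of_mem_erase hq
              refine Finset.mem_erase.mpr ⟨?_, (hmemP s).mpr ⟨q, hqP, hsq⟩⟩
              intro h
              exact Finset.ne_of_mem_erase hq (htonly q hqP (h ▸ hsq))
        · intro q hq
          rcases Finset.mem_insert.mp hq with rfl | hq
          · calc volume (p.erase t) ≤ volume p :=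
                  Finset.card_le_card (Finset.sup_mono (Finset.erase_subset t p))
              _ ≤ C := hvolP p hp
          · exact hvolP q (Finset.mem_of_mem_erase hq)
      · rw [Finset.card_insert_of_notMem hnotin, Finset.card_erase_add_one hp]
  refine ⟨partA, partB, ?_⟩
  unfold minPages
  set S : Set ℕ := {n | ∃ P : Finset (Finset (Finset α)),
    IsValidPagination C T P ∧ P.card = n} with hS
  set S' : Set ℕ := {n | ∃ P : Finset (Finset (Finset α)),
    IsValidPagination C (T.erase t) P ∧ P.card = n} with hS'
  have hA : ∀ n ∈ S', n ∈ S := by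
    rintro n ⟨P', hP', rfl⟩
    have ht'e : t' ∈ T.erase t := Finset.mem_erase.mpr ⟨ht'ne, ht'⟩
    obtain ⟨p, hp, ht'p⟩ := (hP'.1.2.2 t').mp ht'e
    obtain ⟨hvalid, hcard⟩ := partA P' hP' p hp ht'p
    exact ⟨_, hvalid, hcard⟩
  have hB : ∀ n ∈ S, ∃ m ∈ S', m ≤ n := by
    rintro n ⟨P, hP, rfl⟩
    obtain ⟨p, hp, htp⟩ := (hP.1.2.2 t).mp ht
    obtain ⟨hvalid, hcard⟩ := partB P hP p hp htp
    exact ⟨_, ⟨_, hvalid, rfl⟩, hcard⟩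
  by_cases hSne : S.Nonempty
  · obtain ⟨m, hm, hmle⟩ := hB _ (Nat.sInf_mem hSne)
    have h1 : sInf S' ≤ sInf S := le_trans (Nat.sInf_le hm) hmle
    have h2 : sInf S ≤ sInf S' := Nat.sInf_le (hA _ (Nat.sInf_mem ⟨m, hm⟩))
    exact le_antisymm h2 h1
  · have hS'e : S' = ∅ := by
      by_contra h
      exact hSne ⟨_, hA _ (Nat.sInf_mem (Set.nonempty_iff_ne_empty.mpr h))⟩
    rw [Set.not_nonempty_iff_eq_empty.mp hSne, hS'e]
end

section
/- A symbol shared by all tiles can be removed, reducing the capacity by one. Precisely: let T be a finite nonempty collection of finite tiles each of size at least 2, let C ≥ 2 be a capacity, and let α be a symbol belonging to every tile of T. Let T' = { t \ {α} : t ∈ T }. Then the map t ↦ t \ {α} is a bijection from T onto T', and the minimum number of pages over valid paginations of T with capacity C equals the minimum number of pages over valid paginations of T' with capacity C − 1. -/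
open Finset

/-- A symbol `a` shared by all tiles can be removed from every tile, reducing the
capacity by one: the map `t ↦ t \ {a}` is a bijection from `T` onto
`T' = {t \ {a} : t ∈ T}`, and the optimal numbers of pages coincide. -/
theorem stmt7 {α : Type*} [DecidableEq α] (T : Finset (Finset α)) (hT : T.Nonempty)
    (hsize : ∀ t ∈ T, 2 ≤ t.card)
    (C : ℕ) (hC : 2 ≤ C) (a : α) (ha : ∀ t ∈ T, a ∈ t) :
    Set.InjOn (fun t : Finset α => t.erase a) ↑T ∧
    minPages C T = minPages (C - 1) (T.image (fun t => t.erase a)) := by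
  classical
  set e : Finset α → Finset α := fun t => t.erase a with he
  set i : Finset α → Finset α := fun t => insert a t with hi
  have hinj : Set.InjOn e ↑T := by
    intro s hs t ht h
    have h2 : insert a (s.erase a) = insert a (t.erase a) := by
      simpa [he] using congrArg (insert a) h
    rwa [insert_erase (ha s hs), insert_erase (ha t ht)] at h2
  refine ⟨hinj, ?_⟩
  set T' := T.image e with hT'
  have haT' : ∀ t' ∈ T', a ∉ t' := by
    intro t' ht'
    simp only [hT', mem_image] at ht'
    obtain ⟨t, _, rfl⟩ := ht'
    exact notMem_erase a t
  have hsetEq : {n | ∃ P : Finset (Finset (Finset α)), IsValidPagination C T P ∧ P.card = n}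
      = {n | ∃ P : Finset (Finset (Finset α)), IsValidPagination (C - 1) T' P ∧ P.card = n} := by
    ext n
    simp only [Set.mem_setOf_eq]
    constructor
    · rintro ⟨P, ⟨⟨hne, hdisj, hcov⟩, hvol⟩, rfl⟩
      have hsub : ∀ p ∈ P, ∀ t ∈ p, t ∈ T := fun p hp t ht => (hcov t).mpr ⟨p, hp, ht⟩
      -- recover a page from its image
      have hrec : ∀ p ∈ P, (p.image e).image i = p := by
        intro p hp
        rw [Finset.image_image]
        have : ∀ t ∈ p, (i ∘ e) t = t := fun t ht => insert_erase (ha t (hsub p hp t ht))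
        calc p.image (i ∘ e) = p.image id := Finset.image_congr this
          _ = p := Finset.image_id
      refine ⟨P.image (fun p => p.image e), ⟨⟨?_, ?_, ?_⟩, ?_⟩, ?_⟩
      · rintro q hq
        simp only [mem_image] at hq
        obtain ⟨p, hp, rfl⟩ := hq
        exact (hne p hp).image e
      · rintro q hq r hr hqr
        simp only [mem_image] at hq hr
        obtain ⟨p, hp, rfl⟩ := hq
        obtain ⟨s, hs, rfl⟩ := hr
        have hps : p ≠ s := by rintro rfl; exact hqr rfl
        rw [Finset.disjoint_left]
        intro x hx hx'
        simp only [mem_image] at hx hx'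
        obtain ⟨t, ht, rfl⟩ := hx
        obtain ⟨u, hu, heq⟩ := hx'
        have : u = t := hinj (hsub s hs u hu) (hsub p hp t ht) heq
        subst this
        exact (Finset.disjoint_left.mp (hdisj p hp s hs hps) ht) hu
      · intro t'
        constructor
        · intro ht'
          simp only [hT', mem_image] at ht'
          obtain ⟨t, ht, rfl⟩ := ht'
          obtain ⟨p, hp, htp⟩ := (hcov t).mp ht
          exact ⟨p.image e, mem_image_of_mem _ hp, mem_image_of_mem _ htp⟩
        · rintro ⟨q, hq, ht'⟩
          simp only [mem_image] at hq
          obtain ⟨p, hp, rfl⟩ := hq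
          simp only [mem_image] at ht'
          obtain ⟨t, ht, rfl⟩ := ht'
          exact mem_image_of_mem _ (hsub p hp t ht)
      · rintro q hq
        simp only [mem_image] at hq
        obtain ⟨p, hp, rfl⟩ := hq
        have hsup : (p.image e).sup id = (p.sup id).erase a := by
          rw [Finset.sup_image]
          ext x
          simp only [Finset.mem_sup, mem_erase, Function.comp, he, id]
          constructor
          · rintro ⟨t, ht, hx⟩
            exact ⟨hx.1, t, ht, hx.2⟩
          · rintro ⟨hxa, t, ht, hx⟩
            exact ⟨t, ht, hxa, hx⟩
        have hamem : a ∈ p.sup id := by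
          obtain ⟨t, ht⟩ := hne p hp
          exact Finset.mem_sup.mpr ⟨t, ht, ha t (hsub p hp t ht)⟩
        have : volume (p.image e) = volume p - 1 := by
          simp only [volume, hsup, card_erase_of_mem hamem]
        rw [this]
        exact Nat.sub_le_sub_right (hvol p hp) 1
      · rw [Finset.card_image_of_injOn]
        intro p hp q hq h
        rw [← hrec p hp, ← hrec q hq]
        exact congrArg _ h
    · rintro ⟨P, ⟨⟨hne, hdisj, hcov⟩, hvol⟩, rfl⟩
      have hsub : ∀ p ∈ P, ∀ t ∈ p, t ∈ T' := fun p hp t ht => (hcov t).mpr ⟨p, hp, ht⟩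
      have hrec : ∀ p ∈ P, (p.image i).image e = p := by
        intro p hp
        rw [Finset.image_image]
        have : ∀ t ∈ p, (e ∘ i) t = t := fun t ht => erase_insert (haT' t (hsub p hp t ht))
        calc p.image (e ∘ i) = p.image id := Finset.image_congr this
          _ = p := Finset.image_id
      -- insert a back in T': i maps T' into T
      have hiT : ∀ t' ∈ T', i t' ∈ T := by
        intro t' ht'
        simp only [hT', mem_image] at ht'
        obtain ⟨t, ht, rfl⟩ := ht'
        simpa [hi, he, insert_erase (ha t ht)] using ht
      refine ⟨P.image (fun p => p.image i), ⟨⟨?_, ?_, ?_⟩, ?_⟩, ?_⟩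
      · rintro q hq
        simp only [mem_image] at hq
        obtain ⟨p, hp, rfl⟩ := hq
        exact (hne p hp).image i
      · rintro q hq r hr hqr
        simp only [mem_image] at hq hr
        obtain ⟨p, hp, rfl⟩ := hq
        obtain ⟨s, hs, rfl⟩ := hr
        have hps : p ≠ s := by rintro rfl; exact hqr rfl
        rw [Finset.disjoint_left]
        intro x hx hx'
        simp only [mem_image] at hx hx'
        obtain ⟨t, ht, rfl⟩ := hx
        obtain ⟨u, hu, heq⟩ := hx'
        have : u = t := by
          have h2 := congrArg e heq
          simp only [he, hi] at h2
          rwa [erase_insert (haT' u (hsub s hs u hu)),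
            erase_insert (haT' t (hsub p hp t ht))] at h2
        subst this
        exact (Finset.disjoint_left.mp (hdisj p hp s hs hps) ht) hu
      · intro t
        constructor
        · intro ht
          have ht' : e t ∈ T' := mem_image_of_mem _ ht
          obtain ⟨p, hp, htp⟩ := (hcov (e t)).mp ht'
          refine ⟨p.image i, mem_image_of_mem _ hp, ?_⟩
          have : i (e t) = t := insert_erase (ha t ht)
          rw [← this]
          exact mem_image_of_mem _ htp
        · rintro ⟨q, hq, ht⟩
          simp only [mem_image] at hq
          obtain ⟨p, hp, rfl⟩ := hq
          simp only [mem_image] at ht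
          obtain ⟨t', ht', rfl⟩ := ht
          exact hiT t' (hsub p hp t' ht')
      · rintro q hq
        simp only [mem_image] at hq
        obtain ⟨p, hp, rfl⟩ := hq
        have hsup : (p.image i).sup id = insert a (p.sup id) := by
          rw [Finset.sup_image]
          ext x
          simp only [Finset.mem_sup, mem_insert, Function.comp, hi, id]
          constructor
          · rintro ⟨t, ht, hx⟩
            rcases hx with h | h
            · exact Or.inl h
            · exact Or.inr ⟨t, ht, h⟩
          · rintro (h | ⟨t, ht, hx⟩)
            · obtain ⟨t, ht⟩ := hne p hp
              exact ⟨t, ht, Or.inl h⟩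
            · exact ⟨t, ht, Or.inr hx⟩
        have hanmem : a ∉ p.sup id := by
          intro hmem
          obtain ⟨t, ht, hat⟩ := Finset.mem_sup.mp hmem
          exact haT' t (hsub p hp t ht) hat
        have : volume (p.image i) = volume p + 1 := by
          simp only [volume, hsup, card_insert_of_notMem hanmem]
        rw [this]
        have := hvol p hp
        omega
      · rw [Finset.card_image_of_injOn]
        intro p hp q hq h
        rw [← hrec p hp, ← hrec q hq]
        exact congrArg _ h
  unfold minPages
  rw [hT', hsetEq]
end

section
/- The worst-case instance for Any Fit algorithms: let C be a positive even integer and let A, B be disjoint finite sets of symbols with |A| = |B| = C. Let T_A be the collection of all (C/2)-element subsets of A, T_B the collection of all (C/2)-element subsets of B, and T = T_A ∪ T_B (a disjoint union). Then: (i) the two-page pagination (T_A, T_B) of T is valid for capacity C and is optimal, since |A ∪ B| = 2C > C so no single page can hold all the tiles of T; (ii) for every t_a ∈ T_A and t_b ∈ T_B, |t_a ∪ t_b| = C; consequently, for any bijection φ : T_A → T_B, the pagination of T whose pages are the pairs {t, φ(t)} for t ∈ T_A is a valid pagination with exactly binom(C, C/2) pages, each of volume exactly C. -/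
open Finset

/-!
The tiles of `T_A` are disjoint from those of `T_B` and together cover `A ∪ B`, so a single
page would have volume `|A ∪ B| = 2C > C`, while each of `T_A`, `T_B` fits on one page. A tile
of `A` and a tile of `B` are disjoint `C/2`-sets, so every pair `{t, φ t}` has volume exactly `C`.
-/

section

variable {α : Type*}

theorem disjoint_powersetCard_of_disjoint {A B : Finset α} {k : ℕ} (hAB : Disjoint A B)
    (hk : 0 < k) : Disjoint (A.powersetCard k) (B.powersetCard k) := by
  refine disjoint_left.2 fun t htA htB => ?_
  obtain ⟨htA, htk⟩ := mem_powersetCard.1 htA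
  obtain ⟨a, hat⟩ := card_pos.1 (htk ▸ hk)
  exact disjoint_left.1 hAB (htA hat) ((mem_powersetCard.1 htB).1 hat)

variable [DecidableEq α]

theorem sup_powersetCard_id {X : Finset α} {k : ℕ} (hk : 0 < k) (hkX : k ≤ X.card) :
    (X.powersetCard k).sup id = X := by
  refine Subset.antisymm (Finset.sup_le fun t ht => (mem_powersetCard.1 ht).1) fun a ha => ?_
  obtain ⟨t, hat, htX, htk⟩ :=
    exists_subsuperset_card_eq (singleton_subset_iff.2 ha) (by rw [card_singleton]; exact hk) hkX
  exact (le_sup (f := id) (mem_powersetCard.2 ⟨htX, htk⟩) : t ⊆ _) (singleton_subset_iff.1 hat)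

theorem card_union_of_mem_powersetCard {A B s t : Finset α} {k l : ℕ} (hAB : Disjoint A B)
    (hs : s ∈ A.powersetCard k) (ht : t ∈ B.powersetCard l) : (s ∪ t).card = k + l := by
  obtain ⟨hsA, hsk⟩ := mem_powersetCard.1 hs
  obtain ⟨htB, htl⟩ := mem_powersetCard.1 ht
  rw [card_union_of_disjoint (hAB.mono hsA htB), hsk, htl]

theorem volume_mono {p q : Finset (Finset α)} (h : p ⊆ q) : volume p ≤ volume q :=
  card_le_card (sup_mono h)

theorem volume_pair (s t : Finset α) : volume {s, t} = (s ∪ t).card := by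
  simp [volume]

theorem volume_powersetCard_le (X : Finset α) (k : ℕ) : volume (X.powersetCard k) ≤ X.card :=
  card_le_card (Finset.sup_le fun _ ht => (mem_powersetCard.1 ht).1)

theorem IsValidPagination.two_le_card {C : ℕ} {T : Finset (Finset α)}
    {Q : Finset (Finset (Finset α))} (hQ : IsValidPagination C T Q) (hT : C < volume T) :
    2 ≤ Q.card := by
  obtain ⟨⟨-, -, hcover⟩, hvol⟩ := hQ
  by_contra! hQ1
  obtain ⟨t₀, ht₀⟩ : T.Nonempty := nonempty_iff_ne_empty.2 fun h => by simp [h, volume] at hT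
  obtain ⟨p, hp, -⟩ := (hcover t₀).1 ht₀
  have hTp : T ⊆ p := fun t ht => by
    obtain ⟨q, hq, htq⟩ := (hcover t).1 ht
    exact card_le_one.1 (Nat.le_of_lt_succ hQ1) q hq p hp ▸ htq
  exact (volume_mono hTp).trans (hvol p hp) |>.not_gt hT

variable {T₁ T₂ : Finset (Finset α)} {φ : Finset α → Finset α}

theorem isPagination_pair (h₁ : T₁.Nonempty) (h₂ : T₂.Nonempty) (hd : Disjoint T₁ T₂) :
    IsPagination (T₁ ∪ T₂) {T₁, T₂} := by
  refine ⟨by simp [h₁, h₂], ?_, by simp⟩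
  simp only [mem_insert, mem_singleton]
  rintro p (rfl | rfl) q (rfl | rfl) hpq <;> first | exact absurd rfl hpq | exact hd | exact hd.symm

theorem isPagination_image_pair (hφ : Set.BijOn φ T₁ T₂) (hd : Disjoint T₁ T₂) :
    IsPagination (T₁ ∪ T₂) (T₁.image fun s => {s, φ s}) := by
  refine ⟨by simp, ?_, fun t => ?_⟩
  · simp only [mem_image]
    rintro _ ⟨s, hs, rfl⟩ _ ⟨s', hs', rfl⟩ hne
    have hss' : s ≠ s' := by rintro rfl; exact hne rfl
    have hsφ : ∀ {u u'}, u ∈ T₁ → u' ∈ T₁ → u ≠ φ u' := fun hu hu' h =>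
      disjoint_left.1 hd hu (h ▸ hφ.mapsTo hu')
    simp only [disjoint_insert_left, disjoint_insert_right, mem_insert, mem_singleton,
      disjoint_singleton, not_or]
    exact ⟨⟨hss'.symm, hsφ hs' hs⟩, hsφ hs hs', hφ.injOn.ne hs hs' hss'⟩
  · simp only [mem_union, mem_image, exists_exists_and_eq_and, mem_insert, mem_singleton]
    constructor
    · rintro (ht | ht)
      · exact ⟨t, ht, .inl rfl⟩
      · obtain ⟨s, hs, rfl⟩ := hφ.surjOn ht
        exact ⟨s, hs, .inr rfl⟩
    · rintro ⟨s, hs, rfl | rfl⟩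
      · exact .inl hs
      · exact .inr (hφ.mapsTo hs)

theorem card_image_pair (hφ : Set.MapsTo φ T₁ T₂) (hd : Disjoint T₁ T₂) :
    (T₁.image fun s => ({s, φ s} : Finset (Finset α))).card = T₁.card := by
  refine card_image_of_injOn fun s hs s' hs' h => ?_
  have : s ∈ ({s', φ s'} : Finset (Finset α)) := h ▸ mem_insert_self _ _
  simp only [mem_insert, mem_singleton] at this
  exact this.resolve_right fun h' => disjoint_left.1 hd hs (h' ▸ hφ hs')

end

/-- The worst-case instance for Any Fit algorithms: with `C` even, `A, B` disjoint sets
of `C` symbols, `T_A`, `T_B` the `(C/2)`-element subsets of `A` resp. `B`, and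
`T = T_A ∪ T_B`: the two-page pagination `(T_A, T_B)` is valid and optimal, every pair
`{t_a, t_b}` with `t_a ∈ T_A`, `t_b ∈ T_B` has volume exactly `C`, and any bijection
`φ : T_A → T_B` yields a valid pagination whose pages are the pairs `{t, φ t}`, with
exactly `binom(C, C/2)` pages, each of volume exactly `C`. -/
theorem stmt10 {α : Type*} [DecidableEq α] (C : ℕ) (hC : 0 < C) (hE : Even C)
    (A B : Finset α) (hAB : Disjoint A B) (hA : A.card = C) (hB : B.card = C) :
    (A ∪ B).card = 2 * C ∧
    IsValidPagination C (A.powersetCard (C / 2) ∪ B.powersetCard (C / 2))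
      {A.powersetCard (C / 2), B.powersetCard (C / 2)} ∧
    ({A.powersetCard (C / 2), B.powersetCard (C / 2)} :
      Finset (Finset (Finset α))).card = 2 ∧
    (∀ Q, IsValidPagination C (A.powersetCard (C / 2) ∪ B.powersetCard (C / 2)) Q →
      2 ≤ Q.card) ∧
    (∀ ta ∈ A.powersetCard (C / 2), ∀ tb ∈ B.powersetCard (C / 2),
      (ta ∪ tb).card = C) ∧
    (∀ φ : Finset α → Finset α,
      Set.BijOn φ ↑(A.powersetCard (C / 2)) ↑(B.powersetCard (C / 2)) →
      IsValidPagination C (A.powersetCard (C / 2) ∪ B.powersetCard (C / 2))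
        ((A.powersetCard (C / 2)).image (fun s => ({s, φ s} : Finset (Finset α)))) ∧
      ((A.powersetCard (C / 2)).image
        (fun s => ({s, φ s} : Finset (Finset α)))).card = C.choose (C / 2) ∧
      ∀ p ∈ (A.powersetCard (C / 2)).image (fun s => ({s, φ s} : Finset (Finset α))),
        volume p = C) := by
  obtain ⟨k, hCk⟩ := hE
  rw [show C / 2 = k by omega]
  have hkA : k ≤ A.card := by omega
  have hkB : k ≤ B.card := by omega
  have hd := disjoint_powersetCard_of_disjoint hAB (by omega : 0 < k)
  have hTA : (A.powersetCard k).Nonempty := powersetCard_nonempty.2 hkA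
  have hcardAB : (A ∪ B).card = 2 * C := by rw [card_union_of_disjoint hAB]; omega
  have hvolT : volume (A.powersetCard k ∪ B.powersetCard k) = 2 * C := by
    rw [volume, sup_union, sup_powersetCard_id (by omega) hkA, sup_powersetCard_id (by omega) hkB]
    exact hcardAB
  have hpair : ∀ ta ∈ A.powersetCard k, ∀ tb ∈ B.powersetCard k, (ta ∪ tb).card = C :=
    fun ta hta tb htb => (card_union_of_mem_powersetCard hAB hta htb).trans hCk.symm
  refine ⟨hcardAB, ⟨isPagination_pair hTA (powersetCard_nonempty.2 hkB) hd, ?_⟩,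
    card_pair (hd.ne hTA.ne_empty),
    fun Q hQ => hQ.two_le_card (by omega), hpair, fun φ hφ => ?_⟩
  · simp only [mem_insert, mem_singleton]
    rintro p (rfl | rfl)
    exacts [hA ▸ volume_powersetCard_le A k, hB ▸ volume_powersetCard_le B k]
  have hvol : ∀ p ∈ (A.powersetCard k).image fun s => ({s, φ s} : Finset (Finset α)),
      volume p = C :=
    forall_mem_image.2 fun s hs => (volume_pair _ _).trans (hpair s hs _ (hφ.mapsTo hs))
  refine ⟨⟨isPagination_image_pair hφ hd, fun p hp => (hvol p hp).le⟩, ?_, hvol⟩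
  rw [card_image_pair hφ.mapsTo hd, card_powersetCard, hA]
end

section
/- Appending a singleton tile as its own page to an optimal pagination of the reduced instance does not always yield an optimal pagination. Concretely, take capacity C = 5 and tile set T = { {0}, {1,2,3}, {4,5}, {1,6,7}, {8,9} } over the ten distinct symbols 0,…,9, and let t = {0}. Then: (i) P' = ( {{1,2,3},{4,5}}, {{1,6,7},{8,9}} ) is a valid pagination of T \ {t} with 2 pages, and no valid pagination of T \ {t} has fewer than 2 pages, so P' is optimal; (ii) both pages of P' have volume exactly 5 = C, so the tile t cannot be added to either page of P' without exceeding the capacity, and appending the page {t} to P' gives a valid pagination of T with 3 pages; (iii) nevertheless T admits a valid pagination with 2 pages, namely ( {{1,2,3},{1,6,7}}, {{4,5},{8,9},{0}} ); hence the 3-page pagination of (ii) is not optimal. -/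
open Finset

/-- The instance: tiles `{0}, {1,2,3}, {4,5}, {1,6,7}, {8,9}` over symbols 0,…,9. -/
def T13 : Finset (Finset ℕ) := {{0}, {1, 2, 3}, {4, 5}, {1, 6, 7}, {8, 9}}

/-- The optimal pagination of the reduced instance `T13 \ {{0}}`. -/
def P13' : Finset (Finset (Finset ℕ)) := {{{1, 2, 3}, {4, 5}}, {{1, 6, 7}, {8, 9}}}

/-- A 2-page pagination of the full instance `T13`. -/
def R13 : Finset (Finset (Finset ℕ)) := {{{1, 2, 3}, {1, 6, 7}}, {{4, 5}, {8, 9}, {0}}}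

lemma valid_P13' : IsValidPagination 5 (T13.erase {0}) P13' := by
  refine ⟨⟨by decide, by decide, ?_⟩, by decide⟩
  intro t
  simp only [T13, P13', Finset.mem_erase, Finset.mem_insert, Finset.mem_singleton]
  constructor
  · rintro ⟨h0, h⟩
    rcases h with h | h | h | h | h <;> simp [h] at h0 ⊢ <;> tauto
  · rintro ⟨p, hp | hp, ht⟩ <;> subst hp <;>
      rcases Finset.mem_insert.mp ht with h | h <;>
      first
      | (subst h; exact ⟨by decide, by tauto⟩)
      | (rw [Finset.mem_singleton] at h; subst h; exact ⟨by decide, by tauto⟩)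

lemma valid_full (P : Finset (Finset (Finset ℕ)))
    (h1 : ∀ p ∈ P, p.Nonempty) (h2 : ∀ p ∈ P, ∀ q ∈ P, p ≠ q → Disjoint p q)
    (h3 : ∀ t : Finset ℕ, t ∈ T13 ↔ ∃ p ∈ P, t ∈ p)
    (h4 : ∀ p ∈ P, volume p ≤ 5) : IsValidPagination 5 T13 P :=
  ⟨⟨h1, h2, h3⟩, h4⟩

lemma valid_R13 : IsValidPagination 5 T13 R13 := by
  refine ⟨⟨by decide, by decide, ?_⟩, by decide⟩
  intro t
  simp only [T13, R13, Finset.mem_insert, Finset.mem_singleton]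
  constructor
  · rintro (h | h | h | h | h) <;> subst h <;> simp
  · rintro ⟨p, hp | hp, ht⟩ <;> subst hp <;> simp at ht <;> tauto

lemma valid_ins : IsValidPagination 5 T13 (insert {({0} : Finset ℕ)} P13') := by
  refine ⟨⟨by decide, by decide, ?_⟩, by decide⟩
  intro t
  simp only [T13, P13', Finset.mem_insert, Finset.mem_singleton]
  constructor
  · rintro (h | h | h | h | h) <;> subst h <;> simp
  · rintro ⟨p, hp | hp | hp, ht⟩ <;> subst hp <;> simp at ht <;> tauto

lemma lower_bound (Q : Finset (Finset (Finset ℕ)))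
    (hQ : IsValidPagination 5 (T13.erase {0}) Q) : 2 ≤ Q.card := by
  obtain ⟨⟨hne, hdisj, hmem⟩, hvol⟩ := hQ
  by_contra hc
  have hcard : Q.card ≤ 1 := by omega
  have hone := Finset.card_le_one.mp hcard
  obtain ⟨p, hp, hp1⟩ := (hmem {1,2,3}).mp (by decide)
  obtain ⟨q, hq, hq1⟩ := (hmem {4,5}).mp (by decide)
  obtain ⟨r, hr, hr1⟩ := (hmem {1,6,7}).mp (by decide)
  obtain ⟨s, hs, hs1⟩ := (hmem {8,9}).mp (by decide)
  rw [hone q hq p hp] at hq1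
  rw [hone r hr p hp] at hr1
  rw [hone s hs p hp] at hs1
  have ha : (({1,2,3} : Finset ℕ) ∪ {4,5} ∪ {1,6,7} ∪ {8,9}) ⊆ p.sup id :=
    Finset.union_subset (Finset.union_subset (Finset.union_subset
      (Finset.le_sup (f := id) hp1) (Finset.le_sup (f := id) hq1))
      (Finset.le_sup (f := id) hr1)) (Finset.le_sup (f := id) hs1)
  have h9 : (({1,2,3} : Finset ℕ) ∪ {4,5} ∪ {1,6,7} ∪ {8,9}).card = 9 := by decide
  have := Finset.card_le_card ha
  have := hvol p hp
  unfold volume at this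
  omega

/-- Appending a singleton tile as its own page to an optimal pagination of the reduced
instance does not always yield an optimal pagination. -/
theorem stmt13 :
    (IsValidPagination 5 (T13.erase {0}) P13' ∧ P13'.card = 2 ∧
      (∀ Q, IsValidPagination 5 (T13.erase {0}) Q → 2 ≤ Q.card)) ∧
    ((∀ p ∈ P13', volume p = 5) ∧
      (∀ p ∈ P13', 5 < volume (insert ({0} : Finset ℕ) p)) ∧
      IsValidPagination 5 T13 (insert {({0} : Finset ℕ)} P13') ∧
      (insert {({0} : Finset ℕ)} P13').card = 3) ∧
    (IsValidPagination 5 T13 R13 ∧ R13.card = 2 ∧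
      ¬ (∀ Q, IsValidPagination 5 T13 Q → (insert {({0} : Finset ℕ)} P13').card ≤ Q.card)) := by
  refine ⟨⟨valid_P13', by decide, lower_bound⟩,
    ⟨by decide, by decide, valid_ins, by decide⟩,
    valid_R13, by decide, ?_⟩
  intro h
  have := h R13 valid_R13
  revert this
  decide
end
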